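/- arXiv:2007.13121 — 2 statements merged into one kernel-verified Lean document; each statement's English description precedes it below -/
import Mathlib

section
/- Suppose |S*| ≤ k and, for every v ∈ V_critical, p̃_v ∈ {2ε², 3ε², …, 1 − ε²} satisfies P(M(S*) ≤ v) ≤ p̃_v ≤ P(M(S*) ≤ v) + ε². Then the indicator vector ξ* of S* (ξ*_i = 1 iff i ∈ S*) satisfies ∑_{i=1}^n ξ*_i ≤ k and, for every v ∈ V_critical, ln(1/p̃_v) ≤ ∑_{i=1}^n ℓ_{iv} ξ*_i ≤ (1/ε⁴)·ln(1/p̃_v); in particular ξ* is a (1/ε⁴)-feasible solution of the covering integer program (IP_CDF). -/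
/-!
For independent `Xᵢ` the event `max_{i ∈ S*} Xᵢ ≤ v` is the intersection of the events
`Xᵢ ≤ v`, so `P(M(S*) ≤ v) = ∏_{i ∈ S*} P(Xᵢ ≤ v)` and the total load of `S*` at `v` is exactly
`ln(1/P(M(S*) ≤ v))`. Since `p̃_v` overestimates this probability, the covering constraint holds.
For the packing bound, `p̃_v ≥ 2ε²` forces `P(M(S*) ≤ v) ≥ ε²`, so the load is at most
`ln(1/ε²) ≤ 1/ε²`, while `p̃_v ≤ 1 - ε² ≤ e^{-ε²}` gives `ln(1/p̃_v) ≥ ε²`.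
-/

open MeasureTheory ProbabilityTheory
open scoped ENNReal

/-- `maxVal X S ω = max_{i ∈ S} X i ω`, with value `0` for `S = ∅`. -/
noncomputable def maxVal {Ω : Type*} {n : ℕ} (X : Fin n → Ω → ℝ)
    (S : Finset (Fin n)) (ω : Ω) : ℝ :=
  (insert (0 : ℝ) (S.image fun i => X i ω)).max' (Finset.insert_nonempty _ _)

/-- The CDF of the maximum: `cdfMax μ X S v = P(max_{i ∈ S} X i ≤ v)`. -/
noncomputable def cdfMax {Ω : Type*} [MeasurableSpace Ω] (μ : MeasureTheory.Measure Ω)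
    {n : ℕ} (X : Fin n → Ω → ℝ) (S : Finset (Fin n)) (v : ℝ) : ℝ :=
  (μ {ω | maxVal X S ω ≤ v}).toReal

/-- The load `ℓ_{iv} = ln(1/P(Xᵢ ≤ v)) ∈ [0,∞]`, with `ℓ_{iv} = ∞` when `P(Xᵢ ≤ v) = 0`. -/
noncomputable def load {Ω : Type*} [MeasurableSpace Ω] (μ : MeasureTheory.Measure Ω)
    {n : ℕ} (X : Fin n → Ω → ℝ) (i : Fin n) (v : ℝ) : ℝ≥0∞ :=
  if μ {ω | X i ω ≤ v} = 0 then ⊤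
  else ENNReal.ofReal (Real.log (1 / (μ {ω | X i ω ≤ v}).toReal))

lemma Real.le_log_one_div_of_le_one_sub {a p : ℝ} (hp : 0 < p) (h : p ≤ 1 - a) :
    a ≤ Real.log (1 / p) := by
  rw [one_div, Real.log_inv, le_neg, ← Real.log_exp (-a)]
  exact Real.log_le_log hp (by linarith [Real.add_one_le_exp (-a)])

lemma Real.log_one_div_le_of_sq_le_of_le_one_sub_sq {ε c p : ℝ} (hε : 0 < ε)
    (hc : ε ^ 2 ≤ c) (hp : 0 < p) (hp1 : p ≤ 1 - ε ^ 2) :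
    Real.log (1 / c) ≤ 1 / ε ^ 4 * Real.log (1 / p) := by
  have hε2 : 0 < ε ^ 2 := by positivity
  calc Real.log (1 / c) ≤ Real.log (1 / ε ^ 2) :=
        Real.log_le_log (one_div_pos.mpr (hε2.trans_le hc)) (one_div_le_one_div_of_le hε2 hc)
    _ ≤ 1 / ε ^ 2 := Real.log_le_self (by positivity)
    _ = 1 / ε ^ 4 * ε ^ 2 := by field_simp
    _ ≤ 1 / ε ^ 4 * Real.log (1 / p) :=
        mul_le_mul_of_nonneg_left (Real.le_log_one_div_of_le_one_sub hp hp1) (by positivity)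

lemma ENNReal.ofReal_log_one_div_prod {ι : Type*} {s : Finset ι} {q : ι → ℝ}
    (hpos : ∀ i ∈ s, 0 < q i) (hle : ∀ i ∈ s, q i ≤ 1) :
    ENNReal.ofReal (Real.log (1 / ∏ i ∈ s, q i)) =
      ∑ i ∈ s, ENNReal.ofReal (Real.log (1 / q i)) := by
  have hlog_nonneg : ∀ i ∈ s, 0 ≤ Real.log (1 / q i) := fun i hi =>
    Real.log_nonneg (one_le_one_div (hpos i hi) (hle i hi))
  rw [← ENNReal.ofReal_sum_of_nonneg hlog_nonneg, one_div, ← Finset.prod_inv_distrib,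
    Real.log_prod fun i hi => inv_ne_zero (hpos i hi).ne']
  simp only [one_div]

lemma maxVal_le_iff {Ω : Type*} {n : ℕ} {X : Fin n → Ω → ℝ} {S : Finset (Fin n)} {ω : Ω}
    {v : ℝ} : maxVal X S ω ≤ v ↔ 0 ≤ v ∧ ∀ i ∈ S, X i ω ≤ v := by
  simp [maxVal]

section ProbeMax

variable {Ω : Type*} [MeasurableSpace Ω] {μ : Measure Ω} {n : ℕ} {X : Fin n → Ω → ℝ}
  {S : Finset (Fin n)} {v : ℝ}

lemma nonneg_of_cdfMax_pos (h : 0 < cdfMax μ X S v) : 0 ≤ v := by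
  by_contra! hv
  have hempty : {ω | maxVal X S ω ≤ v} = ∅ :=
    Set.eq_empty_of_forall_notMem fun ω hω => hv.not_ge (maxVal_le_iff.mp hω).1
  simp [cdfMax, hempty] at h

lemma cdfMax_eq_prod (hindep : iIndepFun X μ) (hv : 0 ≤ v) :
    cdfMax μ X S v = ∏ i ∈ S, (μ {ω | X i ω ≤ v}).toReal := by
  have hset : {ω | maxVal X S ω ≤ v} = ⋂ i ∈ S, X i ⁻¹' Set.Iic v := by
    ext ω
    simp [maxVal_le_iff, hv]
  rw [cdfMax, hset, hindep.measure_inter_preimage_eq_mul S fun _ _ => measurableSet_Iic,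
    ENNReal.toReal_prod]
  rfl

lemma sum_load_eq_ofReal_log_one_div_cdfMax [IsProbabilityMeasure μ] (hindep : iIndepFun X μ)
    (hpos : 0 < cdfMax μ X S v) :
    ∑ i ∈ S, load μ X i v = ENNReal.ofReal (Real.log (1 / cdfMax μ X S v)) := by
  have hprod := cdfMax_eq_prod (S := S) hindep (nonneg_of_cdfMax_pos hpos)
  have hne : ∀ i ∈ S, (μ {ω | X i ω ≤ v}).toReal ≠ 0 :=
    Finset.prod_ne_zero_iff.mp (hprod ▸ hpos.ne')
  rw [hprod, ENNReal.ofReal_log_one_div_prod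
    (fun i hi => ENNReal.toReal_nonneg.lt_of_ne' (hne i hi)) fun i _ => measureReal_le_one]
  refine Finset.sum_congr rfl fun i hi => ?_
  rw [load, if_neg fun h => hne i hi (by simp [h])]

end ProbeMax

theorem nonadaptive_probemax_optimal_is_rho_feasible_general
    {Ω : Type*} [MeasurableSpace Ω] (μ : Measure Ω) [IsProbabilityMeasure μ]
    (n : ℕ) (ε : ℝ)
    (hε : ε ∈ Set.Ioo (0 : ℝ) 1)
    (X : Fin n → Ω → ℝ)
    (hindep : iIndepFun X μ)
    (Sstar : Finset (Fin n)) (k : ℕ) (hcard : Sstar.card ≤ k)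
    (Vcrit : Finset ℝ)
    (p : ℝ → ℝ)
    (hprange : ∀ v ∈ Vcrit, ∃ j : ℕ, 2 ≤ j ∧ p v = (j : ℝ) * ε ^ 2 ∧ p v ≤ 1 - ε ^ 2)
    (hp : ∀ v ∈ Vcrit,
      cdfMax μ X Sstar v ≤ p v ∧ p v ≤ cdfMax μ X Sstar v + ε ^ 2) :
    (∑ i : Fin n, (if i ∈ Sstar then 1 else 0)) ≤ k ∧
    ∀ v ∈ Vcrit,
      ENNReal.ofReal (Real.log (1 / p v))
          ≤ ∑ i : Fin n, (if i ∈ Sstar then load μ X i v else 0) ∧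
      ∑ i : Fin n, (if i ∈ Sstar then load μ X i v else 0)
          ≤ ENNReal.ofReal ((1 / ε ^ 4) * Real.log (1 / p v)) := by
  refine ⟨by simpa [Finset.sum_ite_mem] using hcard, fun v hv => ?_⟩
  obtain ⟨j, hj, hpj, hp_le⟩ := hprange v hv
  obtain ⟨hcdf_le, hp_le_cdf⟩ := hp v hv
  have hp_ge : 2 * ε ^ 2 ≤ p v := by
    rw [hpj]
    gcongr
    exact_mod_cast hj
  have hcdf_ge : ε ^ 2 ≤ cdfMax μ X Sstar v := by linarith
  have hcdf_pos : 0 < cdfMax μ X Sstar v := lt_of_lt_of_le (pow_pos hε.1 2) hcdf_ge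
  have hp_pos : 0 < p v := hcdf_pos.trans_le hcdf_le
  rw [Finset.sum_ite_mem, Finset.univ_inter, sum_load_eq_ofReal_log_one_div_cdfMax hindep hcdf_pos]
  exact ⟨ENNReal.ofReal_le_ofReal (Real.log_le_log (one_div_pos.mpr hp_pos)
      (one_div_le_one_div_of_le hcdf_pos hcdf_le)),
    ENNReal.ofReal_le_ofReal
      (Real.log_one_div_le_of_sq_le_of_le_one_sub_sq hε.1 hcdf_ge hp_pos hp_le)⟩

/-- **Lemma 3.2, non-adaptive ProbeMax.**  In the ProbeMax setup, suppose
`|S*| ≤ k` and, for every `v ∈ V_critical`, `p̃_v ∈ {2ε², 3ε², …, 1 − ε²}` satisfies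
`P(M(S*) ≤ v) ≤ p̃_v ≤ P(M(S*) ≤ v) + ε²`.  Then the indicator vector `ξ*` of `S*`
satisfies `∑ᵢ ξ*ᵢ ≤ k` and, for every `v ∈ V_critical`,
`ln(1/p̃_v) ≤ ∑ᵢ ℓ_{iv} ξ*ᵢ ≤ (1/ε⁴)·ln(1/p̃_v)`; in particular `ξ*` is a
`(1/ε⁴)`-feasible solution of the covering integer program (IP_CDF). -/
theorem nonadaptive_probemax_optimal_is_rho_feasible
    {Ω : Type*} [MeasurableSpace Ω] (μ : Measure Ω) [IsProbabilityMeasure μ]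
    (n : ℕ) (ε Escale : ℝ) (mε : ℕ) (hmε : 0 < mε)
    (hε : ε ∈ Set.Ioo (0 : ℝ) 1) (hεint : ε * (mε : ℝ) = 1) (hE : 0 < Escale)
    (V : Finset ℝ)
    (hV : V = (Finset.range (mε ^ 2 + 1)).image fun j : ℕ => (j : ℝ) * ε * Escale)
    (X : Fin n → Ω → ℝ)
    (hmeas : ∀ i, Measurable (X i))
    (hval : ∀ i ω, X i ω ∈ V)
    (hindep : iIndepFun X μ)
    (Sstar : Finset (Fin n)) (k : ℕ) (hk : 0 < k) (hcard : Sstar.card ≤ k)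
    (vheavy : ℝ) (Vcrit : Finset ℝ)
    (hheavy : (∃ v ∈ V, cdfMax μ X Sstar v < 1 - ε ^ 2) →
      vheavy ∈ V ∧ cdfMax μ X Sstar vheavy < 1 - ε ^ 2 ∧
      (∀ v ∈ V, cdfMax μ X Sstar v < 1 - ε ^ 2 → v ≤ vheavy) ∧
      Vcrit = V.filter fun v => v ≤ vheavy)
    (hnoheavy : (¬ ∃ v ∈ V, cdfMax μ X Sstar v < 1 - ε ^ 2) → Vcrit = V)
    (p : ℝ → ℝ)
    (hprange : ∀ v ∈ Vcrit, ∃ j : ℕ, 2 ≤ j ∧ p v = (j : ℝ) * ε ^ 2 ∧ p v ≤ 1 - ε ^ 2)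
    (hp : ∀ v ∈ Vcrit,
      cdfMax μ X Sstar v ≤ p v ∧ p v ≤ cdfMax μ X Sstar v + ε ^ 2) :
    (∑ i : Fin n, (if i ∈ Sstar then 1 else 0)) ≤ k ∧
    ∀ v ∈ Vcrit,
      ENNReal.ofReal (Real.log (1 / p v))
          ≤ ∑ i : Fin n, (if i ∈ Sstar then load μ X i v else 0) ∧
      ∑ i : Fin n, (if i ∈ Sstar then load μ X i v else 0)
          ≤ ENNReal.ofReal ((1 / ε ^ 4) * Real.log (1 / p v)) :=
  nonadaptive_probemax_optimal_is_rho_feasible_general μ n ε hε X hindep Sstar k hcard Vcrit p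
    hprange hp
end

section
/- For all indices 1 ≤ a ≤ e ≤ n and every real g with 0 ≤ g ≤ V*_{e+1}, one has ∑_{t=a}^{e} E[(X_{σ*(t)} − g)⁺] ≥ V*_a − V*_{e+1}. Consequently, the bucketing of the optimal permutation satisfies the load constraints of the induced Santa Claus instance: each contiguous block of variables contributes at least the decrease of the optimal suffix values across that block when measured against any guess g below the block's base value. -/
open MeasureTheory ProbabilityTheory

/-! Writing `c = V*_{t+1}`, the recursion gives `V*_t - V*_{t+1} = E[max(X, c)] - c = E[(X - c)⁺]`
for `X = X_{σ*(t)}`. In particular `V*` is nonincreasing, so a guess `g ≤ V*_{e+1}` lies below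
every `V*_{t+1}` with `t ≤ e`, and since `c ↦ E[(X - c)⁺]` is antitone each decrease
`V*_t - V*_{t+1}` is at most `E[(X - g)⁺]`. Summing over `a ≤ t ≤ e` telescopes. -/

theorem Fin.sum_Icc_sub_succ {M : Type*} [AddCommGroup M] {n : ℕ} (f : ℕ → M) {a e : Fin n}
    (hae : a ≤ e) :
    ∑ t ∈ Finset.Icc a e, (f t - f (t + 1)) = f a - f (e + 1) := by
  have htele := Finset.sum_Icc_sub (f := f) (Fin.le_iff_val_le_val.1 hae)
  rw [← Fin.map_valEmbedding_Icc, Finset.sum_map] at htele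
  rw [← neg_sub, ← htele, ← Finset.sum_neg_distrib]
  simp only [Fin.valEmbedding_apply, neg_sub]

section PositivePart

variable {Ω : Type*} [MeasurableSpace Ω] {μ : Measure Ω} {f : Ω → ℝ}

theorem antitone_integral_max_sub_zero [IsFiniteMeasure μ] (hf : Integrable f μ) :
    Antitone fun c : ℝ ↦ ∫ ω, max (f ω - c) 0 ∂μ := fun _ _ hcd ↦
  integral_mono (hf.sub (integrable_const _)).pos_part (hf.sub (integrable_const _)).pos_part
    fun ω ↦ max_le_max (by linarith) le_rfl

theorem integral_max_const_sub_const [IsProbabilityMeasure μ] (hf : Integrable f μ) (c : ℝ) :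
    ∫ ω, max (f ω) c ∂μ - c = ∫ ω, max (f ω - c) 0 ∂μ := by
  have hmax : Integrable (fun ω ↦ max (f ω) c) μ := hf.sup (integrable_const c)
  calc ∫ ω, max (f ω) c ∂μ - c = ∫ ω, (max (f ω) c - c) ∂μ := by
        rw [integral_sub hmax (integrable_const c), integral_const, probReal_univ, one_smul]
    _ = ∫ ω, max (f ω - c) 0 ∂μ := by simp_rw [← max_sub_sub_right, sub_self]

end PositivePart

theorem freeOrderProphets_block_load_guarantee_general
    {Ω : Type*} [MeasurableSpace Ω] (μ : Measure Ω) [IsProbabilityMeasure μ]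
    (n : ℕ) (X : Fin n → Ω → ℝ)
    (hint : ∀ i, Integrable (X i) μ)
    (σstar : Equiv.Perm (Fin n))
    (V : ℕ → ℝ)
    (hV : ∀ t : Fin n, V (t : ℕ) = ∫ ω, max (X (σstar t) ω) (V ((t : ℕ) + 1)) ∂μ) :
    ∀ a e : Fin n, a ≤ e → ∀ g : ℝ, 0 ≤ g → g ≤ V ((e : ℕ) + 1) →
      V (a : ℕ) - V ((e : ℕ) + 1)
        ≤ ∑ t ∈ Finset.Icc a e, ∫ ω, max (X (σstar t) ω - g) 0 ∂μ := by
  intro a e hae g _ hge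
  have hdrop (t : Fin n) :
      V t - V (t + 1) = ∫ ω, max (X (σstar t) ω - V (t + 1)) 0 ∂μ := by
    rw [hV t]
    exact integral_max_const_sub_const (hint _) _
  have hanti : Antitone fun i : Fin (n + 1) ↦ V i := Fin.antitone_iff_succ_le.2 fun t ↦ by
    have hdrop_nonneg : 0 ≤ V t - V (t + 1) :=
      hdrop t ▸ integral_nonneg fun _ ↦ le_max_right _ _
    simpa only [Fin.val_succ, Fin.val_castSucc, sub_nonneg] using hdrop_nonneg
  calc V a - V (e + 1) = ∑ t ∈ Finset.Icc a e, (V t - V (t + 1)) :=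
        (Fin.sum_Icc_sub_succ V hae).symm
    _ ≤ ∑ t ∈ Finset.Icc a e, ∫ ω, max (X (σstar t) ω - g) 0 ∂μ := by
      refine Finset.sum_le_sum fun t ht ↦
        (hdrop t).trans_le <| antitone_integral_max_sub_zero (hint _) ?_
      have hte : t.succ ≤ e.succ := Fin.succ_le_succ_iff.2 (Finset.mem_Icc.1 ht).2
      simpa only [Fin.val_succ] using hge.trans (hanti hte)

/-- Let `V*` be the optimal suffix values of the permutation `σ*`
(`V*_{n+1} = 0` and `V*_t = E[max{X_{σ*(t)}, V*_{t+1}}]`, here 0-based: `V n = 0` and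
`V t = E[max{X_{σ*(t)}, V (t+1)}]` for `t : Fin n`).  Then for all positions
`a ≤ e` and every real `g` with `0 ≤ g ≤ V_{e+1}`:
`∑_{t=a}^{e} E[(X_{σ*(t)} − g)⁺] ≥ V_a − V_{e+1}`.  Consequently, each contiguous block
of the optimal permutation contributes at least the decrease of the optimal suffix
values across that block when measured against any guess `g` below the block's base
value. -/
theorem freeOrderProphets_block_load_guarantee
    {Ω : Type*} [MeasurableSpace Ω] (μ : Measure Ω) [IsProbabilityMeasure μ]
    (n : ℕ) (X : Fin n → Ω → ℝ)
    (hmeas : ∀ i, Measurable (X i))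
    (hint : ∀ i, Integrable (X i) μ)
    (hpos : ∀ i ω, 0 ≤ X i ω)
    (hindep : iIndepFun X μ)
    (σstar : Equiv.Perm (Fin n))
    (V : ℕ → ℝ)
    (hVn : V n = 0)
    (hV : ∀ t : Fin n, V (t : ℕ) = ∫ ω, max (X (σstar t) ω) (V ((t : ℕ) + 1)) ∂μ) :
    ∀ a e : Fin n, a ≤ e → ∀ g : ℝ, 0 ≤ g → g ≤ V ((e : ℕ) + 1) →
      V (a : ℕ) - V ((e : ℕ) + 1)
        ≤ ∑ t ∈ Finset.Icc a e, ∫ ω, max (X (σstar t) ω - g) 0 ∂μ :=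
  freeOrderProphets_block_load_guarantee_general μ n X hint σstar V hV
end
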